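/- Let ρ₁ ∈ (-1, 0), p₁ > p₂ > 0 with 2p₁ + p₂ = 1, and define h(t₂) = p₂·Φ(t₂) + p₁·Φ_{-ρ₁}(t₂, -t₂), the soundness when t₁ = -∞. Then h is maximized at t* = √((1+ρ₁)/(1-ρ₁))·Φ⁻¹((p₁+p₂)/(2p₁)); namely h'(t₂) > 0 for t₂ < t* and h'(t₂) < 0 for t₂ > t*. -/

import Mathlib

/-!
Write `s = √(1 - ρ²)`. The bivariate density factors as `φ x · φ ((y - ρx) / s) / s`, so
`Φ_ρ(a, b) = ∫_{x ≤ a} φ x · Φ ((b - ρx) / s) dx`, and `Φ_ρ` is symmetric by Fubini. Along the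
antidiagonal, `Φ_ρ(t, -t) = Φ_ρ(t₀, -t) + ∫_{t₀}^{t} φ x · Φ ((-t - ρx) / s) dx`; the first term is
differentiated through the symmetric representation, and in the second the dependence of the
integrand on `t` only contributes `O(|t - t₀|²)` because `Φ` is 1-Lipschitz. Using `Φ(-u) = 1 - Φ u`
this gives `h'(t) = 2p₁ φ(t) (r - Φ(t / w))` with `r = (p₁ + p₂) / (2p₁) ∈ (0, 1)` and
`w = √((1 + ρ₁) / (1 - ρ₁))`, whose sign changes exactly at `t = w Φ⁻¹(r)` since `Φ` is strictly
increasing.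
-/

/-- Standard normal CDF. -/
noncomputable def stdNormalCDF (t : ℝ) : ℝ :=
  ∫ x in Set.Iic t, (1 / Real.sqrt (2 * Real.pi)) * Real.exp (-x ^ 2 / 2)

/-- Standard bivariate normal density with correlation `ρ`. -/
noncomputable def biNormalDensity (ρ x y : ℝ) : ℝ :=
  (1 / (2 * Real.pi * Real.sqrt (1 - ρ ^ 2))) *
    Real.exp (-(x ^ 2 - 2 * ρ * x * y + y ^ 2) / (2 * (1 - ρ ^ 2)))

/-- `Φ_ρ(t₁, t₂) = P[X ≤ t₁ ∧ Y ≤ t₂]` for jointly standard Gaussian `(X, Y)` with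
correlation `ρ`.  For `ρ = ±1` the (degenerate) joint distribution gives the
indicated closed forms; for `ρ ∈ (-1, 1)` it is the double integral of the density. -/
noncomputable def biNormalCDF (ρ t₁ t₂ : ℝ) : ℝ :=
  if ρ = 1 then stdNormalCDF (min t₁ t₂)
  else if ρ = -1 then max (stdNormalCDF t₁ + stdNormalCDF t₂ - 1) 0
  else ∫ x in Set.Iic t₁, ∫ y in Set.Iic t₂, biNormalDensity ρ x y

/-- Inverse of the standard normal CDF. -/
noncomputable def stdNormalCDFInv : ℝ → ℝ := Function.invFun stdNormalCDF

open MeasureTheory ProbabilityTheory Set Real Filter Topology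

local notation "φ" => gaussianPDFReal 0 1
local notation "Φ" => stdNormalCDF

section Integrals

variable {E : Type*} [NormedAddCommGroup E] [NormedSpace ℝ E]

lemma integral_comp_sub_div (f : ℝ → E) (m : ℝ) {s : ℝ} (hs : 0 < s) :
    ∫ y, f ((y - m) / s) = s • ∫ u, f u := by
  rw [integral_sub_right_eq_self (fun y => f (y / s)) m, Measure.integral_comp_div,
    abs_of_pos hs]

lemma setIntegral_Iic_comp_sub_div (f : ℝ → E) (m c : ℝ) {s : ℝ} (hs : 0 < s) :
    ∫ y in Iic c, f ((y - m) / s) = s • ∫ u in Iic ((c - m) / s), f u := by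
  have hind : (Iic c).indicator (fun y => f ((y - m) / s))
      = fun y => (Iic ((c - m) / s)).indicator f ((y - m) / s) := by
    ext y
    simp only [indicator, mem_Iic, div_le_div_iff_of_pos_right hs, sub_le_sub_iff_right]
  rw [← integral_indicator measurableSet_Iic, hind, integral_comp_sub_div _ m hs,
    integral_indicator measurableSet_Iic]

lemma hasDerivAt_setIntegral_Iic [CompleteSpace E] {f : ℝ → E} (hf : Continuous f)
    (hfi : Integrable f) (b : ℝ) :
    HasDerivAt (fun b => ∫ x in Iic b, f x) (f b) b := by
  have hsplit : (fun b => ∫ x in Iic b, f x)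
      = fun b => (∫ x in Iic 0, f x) + ∫ x in 0..b, f x := by
    ext u
    rw [← intervalIntegral.integral_Iic_sub_Iic hfi.integrableOn hfi.integrableOn, add_sub_cancel]
  rw [hsplit]
  exact (intervalIntegral.integral_hasDerivAt_right (hf.intervalIntegrable _ _)
    (hf.stronglyMeasurableAtFilter _ _) hf.continuousAt).const_add _

lemma hasDerivAt_intervalIntegral_of_lipschitz [CompleteSpace E] {f : ℝ → ℝ → E} {t₀ L : ℝ}
    (hf : ∀ t, Continuous (f t)) (hL : ∀ t x, ‖f t x - f t₀ x‖ ≤ L * |t - t₀|) :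
    HasDerivAt (fun t => ∫ x in t₀..t, f t x) (f t₀ t₀) t₀ := by
  have hsplit : (fun t => ∫ x in t₀..t, f t x)
      = fun t => (∫ x in t₀..t, f t₀ x) + ∫ x in t₀..t, (f t x - f t₀ x) := by
    ext t
    rw [intervalIntegral.integral_sub ((hf t).intervalIntegrable _ _)
      ((hf t₀).intervalIntegrable _ _), add_sub_cancel]
  have hmain : HasDerivAt (fun t => ∫ x in t₀..t, f t₀ x) (f t₀ t₀) t₀ :=
    intervalIntegral.integral_hasDerivAt_right ((hf t₀).intervalIntegrable _ _)
      ((hf t₀).stronglyMeasurableAtFilter _ _) (hf t₀).continuousAt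
  have herr : HasDerivAt (fun t => ∫ x in t₀..t, (f t x - f t₀ x)) 0 t₀ := by
    rw [hasDerivAt_iff_isLittleO]
    simp only [intervalIntegral.integral_same, sub_zero, smul_zero]
    refine Asymptotics.IsBigO.trans_isLittleO (Asymptotics.IsBigO.of_bound L ?_)
      (Asymptotics.isLittleO_pow_sub_sub t₀ one_lt_two)
    refine Eventually.of_forall fun t => ?_
    calc ‖∫ x in t₀..t, (f t x - f t₀ x)‖ ≤ L * |t - t₀| * |t - t₀| :=
          intervalIntegral.norm_integral_le_of_norm_le_const fun x _ => hL t x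
      _ ≤ L * ‖‖t - t₀‖ ^ 2‖ := by simp [sq, mul_assoc]
  rw [hsplit]
  simpa using hmain.fun_add herr

end Integrals

section StdNormal

lemma stdNormalCDF_eq_integral (t : ℝ) : Φ t = ∫ x in Iic t, φ x := by
  simp [stdNormalCDF, gaussianPDFReal, one_div]

lemma continuous_gaussianPDFReal (μ : ℝ) (v : NNReal) : Continuous (gaussianPDFReal μ v) := by
  rw [gaussianPDFReal_def]; fun_prop

lemma gaussianPDFReal_zero_neg (v : NNReal) (x : ℝ) :
    gaussianPDFReal 0 v (-x) = gaussianPDFReal 0 v x := by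
  simp [gaussianPDFReal]

lemma gaussianPDFReal_zero_one_le_one (x : ℝ) : φ x ≤ 1 := by
  simp only [gaussianPDFReal, NNReal.coe_one, mul_one, sub_zero]
  have h2π : 1 ≤ √(2 * π) := one_le_sqrt.mpr (by linarith [pi_gt_three])
  have hexp : rexp (-x ^ 2 / 2) ≤ 1 :=
    exp_le_one_iff.mpr (div_nonpos_of_nonpos_of_nonneg (neg_nonpos.mpr (sq_nonneg x)) zero_le_two)
  exact mul_le_one₀ (inv_le_one_of_one_le₀ h2π) (exp_pos _).le hexp

lemma hasDerivAt_stdNormalCDF (t : ℝ) : HasDerivAt Φ (φ t) t := by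
  rw [funext stdNormalCDF_eq_integral]
  exact hasDerivAt_setIntegral_Iic (continuous_gaussianPDFReal 0 1)
    (integrable_gaussianPDFReal 0 1) t

lemma continuous_stdNormalCDF : Continuous Φ :=
  continuous_iff_continuousAt.mpr fun t => (hasDerivAt_stdNormalCDF t).continuousAt

lemma lipschitzWith_one_stdNormalCDF : LipschitzWith 1 Φ :=
  lipschitzWith_of_nnnorm_deriv_le (fun t => (hasDerivAt_stdNormalCDF t).differentiableAt)
    fun t => by
      rw [(hasDerivAt_stdNormalCDF t).deriv, ← NNReal.coe_le_coe, coe_nnnorm, norm_of_nonneg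
        (gaussianPDFReal_nonneg 0 1 t)]
      exact gaussianPDFReal_zero_one_le_one t

lemma stdNormalCDF_sub (a b : ℝ) : Φ b - Φ a = ∫ x in a..b, φ x := by
  rw [stdNormalCDF_eq_integral, stdNormalCDF_eq_integral]
  exact intervalIntegral.integral_Iic_sub_Iic (integrable_gaussianPDFReal 0 1).integrableOn
    (integrable_gaussianPDFReal 0 1).integrableOn

lemma strictMono_stdNormalCDF : StrictMono Φ := fun a b hab => by
  have := intervalIntegral.intervalIntegral_pos_of_pos
    ((continuous_gaussianPDFReal 0 1).intervalIntegrable a b)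
    (fun x => gaussianPDFReal_pos 0 1 x one_ne_zero) hab
  linarith [stdNormalCDF_sub a b]

lemma stdNormalCDF_neg (t : ℝ) : Φ (-t) = 1 - Φ t := by
  have hIoi : Φ (-t) = ∫ x in Ioi t, φ x := calc
    Φ (-t) = ∫ x in Iic (-t), φ (-x) := by
      simp only [gaussianPDFReal_zero_neg, stdNormalCDF_eq_integral]
    _ = ∫ x in Ioi t, φ x := by rw [integral_comp_neg_Iic, neg_neg]
  have hsum := intervalIntegral.integral_Iic_add_Ioi (b := t)
    (integrable_gaussianPDFReal 0 1).integrableOn (integrable_gaussianPDFReal 0 1).integrableOn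
  rw [integral_gaussianPDFReal_eq_one 0 one_ne_zero, ← hIoi, ← stdNormalCDF_eq_integral] at hsum
  linarith

lemma stdNormalCDF_eq_cdf : Φ = cdf (gaussianReal 0 1) := by
  ext t
  rw [cdf_eq_real, measureReal_def, gaussianReal_apply_eq_integral 0 one_ne_zero,
    ENNReal.toReal_ofReal (integral_nonneg (gaussianPDFReal_nonneg 0 1)),
    stdNormalCDF_eq_integral]

lemma stdNormalCDF_stdNormalCDFInv {r : ℝ} (h0 : 0 < r) (h1 : r < 1) :
    Φ (stdNormalCDFInv r) = r := by
  have hbot : Tendsto Φ atBot (𝓝 0) := stdNormalCDF_eq_cdf ▸ tendsto_cdf_atBot _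
  have htop : Tendsto Φ atTop (𝓝 1) := stdNormalCDF_eq_cdf ▸ tendsto_cdf_atTop _
  obtain ⟨a, ha⟩ := (hbot.eventually_lt_const h0).exists
  obtain ⟨b, hb⟩ := (htop.eventually_const_lt h1).exists
  obtain ⟨c, -, hc⟩ := intermediate_value_uIcc continuous_stdNormalCDF.continuousOn
    (Set.mem_uIcc.mpr (Or.inl ⟨ha.le, hb.le⟩))
  exact Function.invFun_eq ⟨c, hc⟩

lemma integrable_gaussianPDFReal_mul_stdNormalCDF {g : ℝ → ℝ} (hg : Continuous g) :
    Integrable fun x => φ x * Φ (g x) := by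
  refine (integrable_gaussianPDFReal 0 1).mul_bdd (c := 1)
    (continuous_stdNormalCDF.comp hg).aestronglyMeasurable (Eventually.of_forall fun x => ?_)
  rw [stdNormalCDF_eq_cdf, norm_of_nonneg (cdf_nonneg _ _)]
  exact cdf_le_one _ _

end StdNormal

section BivariateNormal

variable {ρ : ℝ}

lemma sqrt_one_sub_sq_pos (hρ : ρ ∈ Ioo (-1 : ℝ) 1) : 0 < √(1 - ρ ^ 2) :=
  sqrt_pos.mpr (by nlinarith [hρ.1, hρ.2])

lemma biNormalDensity_eq (hρ : ρ ∈ Ioo (-1 : ℝ) 1) (x y : ℝ) :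
    biNormalDensity ρ x y = φ x * φ ((y - ρ * x) / √(1 - ρ ^ 2)) / √(1 - ρ ^ 2) := by
  have hpos : 0 < 1 - ρ ^ 2 := by nlinarith [hρ.1, hρ.2]
  have hs2 : √(1 - ρ ^ 2) ^ 2 = 1 - ρ ^ 2 := sq_sqrt hpos.le
  have hexp : rexp (-x ^ 2 / 2) * rexp (-((y - ρ * x) / √(1 - ρ ^ 2)) ^ 2 / 2)
      = rexp (-(x ^ 2 - 2 * ρ * x * y + y ^ 2) / (2 * (1 - ρ ^ 2))) := by
    rw [← exp_add, div_pow, hs2]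
    congr 1
    field_simp
    ring
  simp only [biNormalDensity, gaussianPDFReal, NNReal.coe_one, mul_one, sub_zero, ← hexp]
  field_simp
  exact sq_sqrt (by positivity)

lemma biNormalDensity_nonneg (ρ x y : ℝ) : 0 ≤ biNormalDensity ρ x y := by
  unfold biNormalDensity; positivity

lemma biNormalDensity_comm (ρ x y : ℝ) : biNormalDensity ρ x y = biNormalDensity ρ y x := by
  unfold biNormalDensity; ring_nf

lemma integral_biNormalDensity_right (hρ : ρ ∈ Ioo (-1 : ℝ) 1) (x : ℝ) :
    ∫ y, biNormalDensity ρ x y = φ x := by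
  have hs := sqrt_one_sub_sq_pos hρ
  simp_rw [biNormalDensity_eq hρ, mul_div_right_comm (φ x)]
  rw [integral_const_mul, integral_comp_sub_div _ _ hs,
    integral_gaussianPDFReal_eq_one 0 one_ne_zero, smul_eq_mul, mul_one,
    div_mul_cancel₀ _ hs.ne']

lemma setIntegral_Iic_biNormalDensity_right (hρ : ρ ∈ Ioo (-1 : ℝ) 1) (x c : ℝ) :
    ∫ y in Iic c, biNormalDensity ρ x y = φ x * Φ ((c - ρ * x) / √(1 - ρ ^ 2)) := by
  have hs := sqrt_one_sub_sq_pos hρ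
  simp_rw [biNormalDensity_eq hρ, mul_div_right_comm (φ x)]
  rw [integral_const_mul, setIntegral_Iic_comp_sub_div _ _ _ hs, ← stdNormalCDF_eq_integral,
    smul_eq_mul, ← mul_assoc, div_mul_cancel₀ _ hs.ne']

lemma integrable_biNormalDensity (hρ : ρ ∈ Ioo (-1 : ℝ) 1) :
    Integrable (fun p : ℝ × ℝ => biNormalDensity ρ p.1 p.2) (volume.prod volume) := by
  have hs := sqrt_one_sub_sq_pos hρ
  refine (integrable_prod_iff (by unfold biNormalDensity; fun_prop)).mpr ⟨?_, ?_⟩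
  · refine Eventually.of_forall fun x => ?_
    simp_rw [biNormalDensity_eq hρ]
    exact ((((integrable_gaussianPDFReal 0 1).comp_div hs.ne').comp_sub_right
      (ρ * x)).const_mul (φ x)).div_const _
  · simp_rw [norm_of_nonneg (biNormalDensity_nonneg _ _ _), integral_biNormalDensity_right hρ]
    exact integrable_gaussianPDFReal 0 1

lemma biNormalCDF_of_mem_Ioo (hρ : ρ ∈ Ioo (-1 : ℝ) 1) (a b : ℝ) :
    biNormalCDF ρ a b = ∫ x in Iic a, ∫ y in Iic b, biNormalDensity ρ x y := by
  rw [biNormalCDF, if_neg hρ.2.ne, if_neg hρ.1.ne']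

lemma biNormalCDF_eq_integral (hρ : ρ ∈ Ioo (-1 : ℝ) 1) (a b : ℝ) :
    biNormalCDF ρ a b = ∫ x in Iic a, φ x * Φ ((b - ρ * x) / √(1 - ρ ^ 2)) := by
  rw [biNormalCDF_of_mem_Ioo hρ]
  exact setIntegral_congr_fun measurableSet_Iic fun x _ =>
    setIntegral_Iic_biNormalDensity_right hρ x b

lemma biNormalCDF_comm (hρ : ρ ∈ Ioo (-1 : ℝ) 1) (a b : ℝ) :
    biNormalCDF ρ a b = biNormalCDF ρ b a := by
  rw [biNormalCDF_of_mem_Ioo hρ, biNormalCDF_of_mem_Ioo hρ, integral_integral_swap]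
  · exact setIntegral_congr_fun measurableSet_Iic fun y _ =>
      setIntegral_congr_fun measurableSet_Iic fun x _ => biNormalDensity_comm ρ x y
  · rw [Measure.prod_restrict]
    exact (integrable_biNormalDensity hρ).restrict

lemma hasDerivAt_biNormalCDF_right (hρ : ρ ∈ Ioo (-1 : ℝ) 1) (a b : ℝ) :
    HasDerivAt (biNormalCDF ρ a) (φ b * Φ ((a - ρ * b) / √(1 - ρ ^ 2))) b := by
  have hcont : Continuous fun y => φ y * Φ ((a - ρ * y) / √(1 - ρ ^ 2)) :=
    (continuous_gaussianPDFReal 0 1).mul (continuous_stdNormalCDF.comp (by fun_prop))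
  rw [funext (biNormalCDF_comm hρ a), funext (biNormalCDF_eq_integral hρ · a)]
  exact hasDerivAt_setIntegral_Iic hcont
    (integrable_gaussianPDFReal_mul_stdNormalCDF (by fun_prop)) b

lemma biNormalCDF_sub_left (hρ : ρ ∈ Ioo (-1 : ℝ) 1) (a a' b : ℝ) :
    biNormalCDF ρ a' b - biNormalCDF ρ a b
      = ∫ x in a..a', φ x * Φ ((b - ρ * x) / √(1 - ρ ^ 2)) := by
  have hint := integrable_gaussianPDFReal_mul_stdNormalCDF
    (show Continuous fun x => (b - ρ * x) / √(1 - ρ ^ 2) by fun_prop)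
  rw [biNormalCDF_eq_integral hρ, biNormalCDF_eq_integral hρ]
  exact intervalIntegral.integral_Iic_sub_Iic hint.integrableOn hint.integrableOn

lemma hasDerivAt_biNormalCDF_antidiag (hρ : ρ ∈ Ioo (-1 : ℝ) 1) (t₀ : ℝ) :
    HasDerivAt (fun t => biNormalCDF ρ t (-t))
      (φ t₀ * (1 - 2 * Φ ((1 + ρ) / √(1 - ρ ^ 2) * t₀))) t₀ := by
  set s := √(1 - ρ ^ 2)
  have hs : 0 < s := sqrt_one_sub_sq_pos hρ
  have hsplit : (fun t => biNormalCDF ρ t (-t))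
      = fun t => biNormalCDF ρ t₀ (-t) + ∫ x in t₀..t, φ x * Φ ((-t - ρ * x) / s) := by
    ext t
    rw [← biNormalCDF_sub_left hρ, add_sub_cancel]
  have hright : HasDerivAt (fun t => biNormalCDF ρ t₀ (-t))
      (φ (-t₀) * Φ ((t₀ - ρ * -t₀) / s) * -1) t₀ :=
    (hasDerivAt_biNormalCDF_right hρ t₀ (-t₀)).comp t₀ (hasDerivAt_neg t₀)
  have hleft : HasDerivAt (fun t => ∫ x in t₀..t, φ x * Φ ((-t - ρ * x) / s))
      (φ t₀ * Φ ((-t₀ - ρ * t₀) / s)) t₀ := by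
    refine hasDerivAt_intervalIntegral_of_lipschitz (L := s⁻¹)
      (fun t => (continuous_gaussianPDFReal 0 1).mul (continuous_stdNormalCDF.comp
        (by fun_prop))) fun t x => ?_
    have hΦ :=
      lipschitzWith_one_stdNormalCDF.dist_le_mul ((-t - ρ * x) / s) ((-t₀ - ρ * x) / s)
    rw [NNReal.coe_one, one_mul, dist_eq, dist_eq, ← sub_div, abs_div, abs_of_pos hs,
      show -t - ρ * x - (-t₀ - ρ * x) = -(t - t₀) by ring, abs_neg] at hΦ
    rw [← mul_sub, norm_mul, norm_of_nonneg (gaussianPDFReal_nonneg 0 1 x), norm_eq_abs,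
      inv_mul_eq_div]
    calc φ x * |Φ ((-t - ρ * x) / s) - Φ ((-t₀ - ρ * x) / s)| ≤ 1 * (|t - t₀| / s) :=
          mul_le_mul (gaussianPDFReal_zero_one_le_one x) hΦ (abs_nonneg _) zero_le_one
      _ = |t - t₀| / s := one_mul _
  rw [hsplit]
  refine (hright.fun_add hleft).congr_deriv ?_
  rw [gaussianPDFReal_zero_neg, show (t₀ - ρ * -t₀) / s = (1 + ρ) / s * t₀ by ring,
    show (-t₀ - ρ * t₀) / s = -((1 + ρ) / s * t₀) by ring, stdNormalCDF_neg]
  ring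

end BivariateNormal

lemma one_add_div_sqrt_one_sub_sq {ρ : ℝ} (hρ : ρ ∈ Ioo (-1 : ℝ) 1) :
    (1 + ρ) / √(1 - ρ ^ 2) = (√((1 - ρ) / (1 + ρ)))⁻¹ := by
  have h₁ : 0 < 1 - ρ := by linarith [hρ.2]
  have h₂ : 0 < 1 + ρ := by linarith [hρ.1]
  rw [show 1 - ρ ^ 2 = (1 - ρ) * (1 + ρ) by ring, sqrt_mul h₁.le, sqrt_div h₁.le, inv_div]
  nth_rewrite 1 [← mul_self_sqrt h₂.le]
  field_simp

theorem boundary_soundness_max_general (ρ₁ p₁ p₂ : ℝ) (hρ₁ : ρ₁ ∈ Set.Ioo (-1 : ℝ) 0)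
    (hp : p₂ < p₁) (hp₂ : 0 < p₂) :
    (∀ t₂ < Real.sqrt ((1 + ρ₁) / (1 - ρ₁)) * stdNormalCDFInv ((p₁ + p₂) / (2 * p₁)),
      0 < deriv (fun t => p₂ * stdNormalCDF t + p₁ * biNormalCDF (-ρ₁) t (-t)) t₂) ∧
    (∀ t₂, Real.sqrt ((1 + ρ₁) / (1 - ρ₁)) * stdNormalCDFInv ((p₁ + p₂) / (2 * p₁)) < t₂ →
      deriv (fun t => p₂ * stdNormalCDF t + p₁ * biNormalCDF (-ρ₁) t (-t)) t₂ < 0) := by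
  have hρ : -ρ₁ ∈ Ioo (-1 : ℝ) 1 := ⟨by linarith [hρ₁.2], by linarith [hρ₁.1]⟩
  have hp₁ : 0 < p₁ := hp₂.trans hp
  set w := √((1 + ρ₁) / (1 - ρ₁))
  have hw : 0 < w := sqrt_pos.mpr (div_pos (by linarith [hρ₁.1]) (by linarith [hρ₁.2]))
  have hslope : (1 + -ρ₁) / √(1 - (-ρ₁) ^ 2) = w⁻¹ := by
    rw [one_add_div_sqrt_one_sub_sq hρ, sub_neg_eq_add, ← sub_eq_add_neg]
  set r := (p₁ + p₂) / (2 * p₁) with hr_def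
  have hr : Φ (stdNormalCDFInv r) = r :=
    stdNormalCDF_stdNormalCDFInv (by positivity) (by rw [div_lt_one (by positivity)]; linarith)
  have hderiv (t : ℝ) : deriv (fun t => p₂ * Φ t + p₁ * biNormalCDF (-ρ₁) t (-t)) t
      = 2 * p₁ * φ t * (r - Φ (t / w)) := by
    rw [(((hasDerivAt_stdNormalCDF t).const_mul p₂).fun_add
      ((hasDerivAt_biNormalCDF_antidiag hρ t).const_mul p₁)).deriv, hslope, inv_mul_eq_div,
      hr_def]
    field_simp
    ring
  have hφ (t : ℝ) : 0 < 2 * p₁ * φ t :=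
    mul_pos (by positivity) (gaussianPDFReal_pos 0 1 t one_ne_zero)
  refine ⟨fun t ht => ?_, fun t ht => ?_⟩
  · have hΦ := hr ▸ strictMono_stdNormalCDF ((div_lt_iff₀' hw).mpr ht)
    rw [hderiv]
    exact mul_pos (hφ t) (sub_pos.mpr hΦ)
  · have hΦ := hr ▸ strictMono_stdNormalCDF ((lt_div_iff₀' hw).mpr ht)
    rw [hderiv]
    exact mul_neg_of_pos_of_neg (hφ t) (sub_neg.mpr hΦ)

/-- Let `h(t₂) = p₂·Φ(t₂) + p₁·Φ_{-ρ₁}(t₂, -t₂)` be the soundness when `t₁ = -∞`.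
For `ρ₁ ∈ (-1,0)` and `p₁ > p₂ > 0` with `2p₁ + p₂ = 1`, `h` is maximized at
`t* = √((1+ρ₁)/(1-ρ₁))·Φ⁻¹((p₁+p₂)/(2p₁))`: its derivative is positive before `t*`
and negative after `t*`. -/
theorem boundary_soundness_max (ρ₁ p₁ p₂ : ℝ) (hρ₁ : ρ₁ ∈ Set.Ioo (-1 : ℝ) 0)
    (hp : p₂ < p₁) (hp₂ : 0 < p₂) (hsum : 2 * p₁ + p₂ = 1) :
    (∀ t₂ < Real.sqrt ((1 + ρ₁) / (1 - ρ₁)) * stdNormalCDFInv ((p₁ + p₂) / (2 * p₁)),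
      0 < deriv (fun t => p₂ * stdNormalCDF t + p₁ * biNormalCDF (-ρ₁) t (-t)) t₂) ∧
    (∀ t₂, Real.sqrt ((1 + ρ₁) / (1 - ρ₁)) * stdNormalCDFInv ((p₁ + p₂) / (2 * p₁)) < t₂ →
      deriv (fun t => p₂ * stdNormalCDF t + p₁ * biNormalCDF (-ρ₁) t (-t)) t₂ < 0) :=
  boundary_soundness_max_general ρ₁ p₁ p₂ hρ₁ hp hp₂
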